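/- Let V be a bounded function on Δ satisfying the Bellman equation for subsidy m. Then V is Lipschitz continuous with respect to the ℓ¹-distance with constant B_max/(1−β): for all ω₁, ω₂ ∈ Δ, |V(ω₁) − V(ω₂)| ≤ (B_max/(1−β)) · Σ_i |ω₁,ᵢ − ω₂,ᵢ|, where B_max = max_i B_i. -/

import Mathlib

open Matrix Finset Filter Topology

/-! If `|V ω₁ - V ω₂| ≤ L ‖ω₁ - ω₂‖₁ + M` on the simplex, with `L = B_max/(1-β)` and `M ≥ 0`,
then the Bellman equation gives the same bound with `β M` in place of `M`. The active branch is a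
zero-sum combination of the values `B k + β V(p_k)`, whose oscillation is at most
`B_max + β (2L + M)`, and the passive branch only sees `ω ↦ ωP`, an `ℓ¹`-contraction of the
simplex. Boundedness of `V` gives the bound with `M = 2C`, and iterating drives the excess to 0. -/

lemma abs_sum_mul_le_of_sum_eq_zero {ι : Type*} [Fintype ι] {c x : ι → ℝ}
    (hc : ∑ i, c i = 0) {A : ℝ} (hx : ∀ i j, x i - x j ≤ A) :
    |∑ i, c i * x i| ≤ (∑ i, |c i|) * (A / 2) := by
  cases isEmpty_or_nonempty ι
  · simp
  obtain ⟨j, -, hj⟩ := exists_max_image univ x univ_nonempty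
  -- As `∑ c = 0`, `x` may be recentred at `x j - A / 2`, within `A / 2` of every `x i`.
  have hshift : ∑ i, c i * x i = ∑ i, c i * (x i - (x j - A / 2)) := by
    simp only [mul_sub, sum_sub_distrib, ← sum_mul, hc, zero_mul, sub_zero]
  rw [hshift, sum_mul]
  refine (abs_sum_le_sum_abs _ _).trans (sum_le_sum fun i _ => ?_)
  rw [abs_mul]
  gcongr
  rw [abs_le]
  constructor <;> linarith [hj i (mem_univ i), hx j i]

lemma sum_abs_sub_le_two {ι : Type*} [Fintype ι] {x y : ι → ℝ}
    (hx : x ∈ stdSimplex ℝ ι) (hy : y ∈ stdSimplex ℝ ι) : ∑ i, |x i - y i| ≤ 2 :=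
  calc ∑ i, |x i - y i| ≤ ∑ i, (x i + y i) :=
        sum_le_sum fun i _ => abs_sub_le_iff.2 ⟨by linarith [hy.1 i], by linarith [hx.1 i]⟩
    _ = 2 := by rw [sum_add_distrib, hx.2, hy.2]; norm_num

namespace Matrix

variable {n : Type*} [Fintype n] [DecidableEq n] {M : Matrix n n ℝ}

lemma row_mem_stdSimplex (hM : M ∈ rowStochastic ℝ n) (i : n) : M i ∈ stdSimplex ℝ n :=
  ⟨fun _ => hM.1 i _, sum_row_of_mem_rowStochastic hM i⟩

lemma vecMul_mem_stdSimplex (hM : M ∈ rowStochastic ℝ n) {x : n → ℝ}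
    (hx : x ∈ stdSimplex ℝ n) : x ᵥ* M ∈ stdSimplex ℝ n := by
  refine ⟨nonneg_vecMul_of_mem_rowStochastic hM hx.1, ?_⟩
  have := vecMul_dotProduct_one_eq_one_rowStochastic hM (by rw [dotProduct_one, hx.2])
  rwa [dotProduct_one] at this

lemma sum_abs_vecMul_sub_le (hM : M ∈ rowStochastic ℝ n) (x y : n → ℝ) :
    ∑ j, |(x ᵥ* M) j - (y ᵥ* M) j| ≤ ∑ i, |x i - y i| :=
  calc ∑ j, |(x ᵥ* M) j - (y ᵥ* M) j| = ∑ j, |∑ i, (x i - y i) * M i j| := by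
        refine sum_congr rfl fun j _ => ?_
        rw [← Pi.sub_apply (x ᵥ* M), ← sub_vecMul]
        rfl
    _ ≤ ∑ j, ∑ i, |x i - y i| * M i j := by
        gcongr with j
        refine (abs_sum_le_sum_abs _ _).trans_eq (sum_congr rfl fun i _ => ?_)
        rw [abs_mul, abs_of_nonneg (hM.1 i j)]
    _ = ∑ i, |x i - y i| := by
        rw [sum_comm]
        simp only [← mul_sum, sum_row_of_mem_rowStochastic hM, mul_one]

end Matrix

section Bellman

variable {n : Type*} [Fintype n]

def activeValue (P : Matrix n n ℝ) (B : n → ℝ) (β : ℝ) (V : (n → ℝ) → ℝ) (ω : n → ℝ) : ℝ :=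
  ω ⬝ᵥ B + β * ∑ k, ω k * V (P k)

def passiveValue (P : Matrix n n ℝ) (β m : ℝ) (V : (n → ℝ) → ℝ) (ω : n → ℝ) : ℝ :=
  m + β * V (ω ᵥ* P)

def IsBellmanSolution (P : Matrix n n ℝ) (B : n → ℝ) (β m : ℝ) (V : (n → ℝ) → ℝ) : Prop :=
  ∀ ω ∈ stdSimplex ℝ n, V ω = max (activeValue P B β V ω) (passiveValue P β m V ω)

variable {P : Matrix n n ℝ} {B : n → ℝ} {β m L M Bmax : ℝ} {V : (n → ℝ) → ℝ}

lemma activeValue_eq_dotProduct (ω : n → ℝ) :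
    activeValue P B β V ω = ω ⬝ᵥ fun k => B k + β * V (P k) := by
  simp only [activeValue, dotProduct, mul_add, sum_add_distrib, mul_sum]
  ring_nf

variable [DecidableEq n]

lemma abs_activeValue_sub_le (hP : P ∈ rowStochastic ℝ n) (hβ₀ : 0 ≤ β) (hL : 0 ≤ L)
    (hosc : ∀ i j, B i - B j ≤ Bmax)
    (hgap : ∀ x ∈ stdSimplex ℝ n, ∀ y ∈ stdSimplex ℝ n,
      |V x - V y| ≤ L * ∑ i, |x i - y i| + M)
    {ω₁ ω₂ : n → ℝ} (h₁ : ω₁ ∈ stdSimplex ℝ n) (h₂ : ω₂ ∈ stdSimplex ℝ n) :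
    |activeValue P B β V ω₁ - activeValue P B β V ω₂| ≤
      (∑ i, |ω₁ i - ω₂ i|) * ((Bmax + β * (2 * L + M)) / 2) := by
  have hrows : ∀ j k, V (P j) - V (P k) ≤ 2 * L + M := fun j k => by
    have := hgap _ (row_mem_stdSimplex hP j) _ (row_mem_stdSimplex hP k)
    nlinarith [le_abs_self (V (P j) - V (P k)),
      sum_abs_sub_le_two (row_mem_stdSimplex hP j) (row_mem_stdSimplex hP k)]
  have hsum : ∑ i, (ω₁ - ω₂) i = 0 := by simp [sum_sub_distrib, h₁.2, h₂.2]
  rw [activeValue_eq_dotProduct, activeValue_eq_dotProduct, ← sub_dotProduct]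
  have := abs_sum_mul_le_of_sum_eq_zero hsum (x := fun k => B k + β * V (P k))
    (A := Bmax + β * (2 * L + M)) fun i j => by
      nlinarith [hosc i j, mul_le_mul_of_nonneg_left (hrows i j) hβ₀]
  simpa only [dotProduct, Pi.sub_apply] using this

lemma abs_passiveValue_sub_le (hP : P ∈ rowStochastic ℝ n) (hβ₀ : 0 ≤ β) (hL : 0 ≤ L)
    (hgap : ∀ x ∈ stdSimplex ℝ n, ∀ y ∈ stdSimplex ℝ n,
      |V x - V y| ≤ L * ∑ i, |x i - y i| + M)
    {ω₁ ω₂ : n → ℝ} (h₁ : ω₁ ∈ stdSimplex ℝ n) (h₂ : ω₂ ∈ stdSimplex ℝ n) :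
    |passiveValue P β m V ω₁ - passiveValue P β m V ω₂| ≤
      β * (L * ∑ i, |ω₁ i - ω₂ i| + M) :=
  calc |passiveValue P β m V ω₁ - passiveValue P β m V ω₂|
      = β * |V (ω₁ ᵥ* P) - V (ω₂ ᵥ* P)| := by
        rw [passiveValue, passiveValue, add_sub_add_left_eq_sub, ← mul_sub, abs_mul,
          abs_of_nonneg hβ₀]
    _ ≤ β * (L * ∑ i, |ω₁ i - ω₂ i| + M) := by
        gcongr
        refine (hgap _ (vecMul_mem_stdSimplex hP h₁) _ (vecMul_mem_stdSimplex hP h₂)).trans ?_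
        gcongr L * ?_ + M
        exact sum_abs_vecMul_sub_le hP ω₁ ω₂

lemma IsBellmanSolution.abs_sub_le_add_mul (hV : IsBellmanSolution P B β m V)
    (hP : P ∈ rowStochastic ℝ n) (hβ₀ : 0 ≤ β) (hβ₁ : β ≤ 1) (hL : 0 ≤ L) (hM : 0 ≤ M)
    (hosc : ∀ i j, B i - B j ≤ Bmax) (hBL : Bmax ≤ (1 - β) * L)
    (hgap : ∀ x ∈ stdSimplex ℝ n, ∀ y ∈ stdSimplex ℝ n,
      |V x - V y| ≤ L * ∑ i, |x i - y i| + M) :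
    ∀ x ∈ stdSimplex ℝ n, ∀ y ∈ stdSimplex ℝ n,
      |V x - V y| ≤ L * ∑ i, |x i - y i| + β * M := by
  intro x hx y hy
  have hd₀ : 0 ≤ ∑ i, |x i - y i| := sum_nonneg fun i _ => abs_nonneg _
  have hd₂ := sum_abs_sub_le_two hx hy
  rw [hV x hx, hV y hy]
  refine (abs_max_sub_max_le_max _ _ _ _).trans (max_le ?_ ?_)
  · refine (abs_activeValue_sub_le hP hβ₀ hL hosc hgap hx hy).trans ?_
    nlinarith [mul_le_mul_of_nonneg_left hBL hd₀,
      mul_nonneg (mul_nonneg hd₀ hL) (sub_nonneg.2 hβ₁),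
      mul_nonneg (mul_nonneg hβ₀ hM) (sub_nonneg.2 hd₂)]
  · refine (abs_passiveValue_sub_le hP hβ₀ hL hgap hx hy).trans ?_
    nlinarith [mul_nonneg (mul_nonneg hd₀ hL) (sub_nonneg.2 hβ₁)]

end Bellman

lemma le_of_forall_le_add_pow_mul {a b c β : ℝ} (hβ₀ : 0 ≤ β) (hβ₁ : β < 1)
    (h : ∀ k : ℕ, a ≤ b + β ^ k * c) : a ≤ b := by
  have : Tendsto (fun k : ℕ => b + β ^ k * c) atTop (𝓝 (b + 0 * c)) :=
    tendsto_const_nhds.add ((tendsto_pow_atTop_nhds_zero_of_lt_one hβ₀ hβ₁).mul_const c)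
  simpa using ge_of_tendsto' this h

theorem bellman_value_lipschitz_general (K : ℕ)
    (P : Matrix (Fin K) (Fin K) ℝ)
    (hPnn : ∀ i j, 0 ≤ P i j) (hProw : ∀ i, ∑ j, P i j = 1)
    (B : Fin K → ℝ) (hB : ∀ i, 0 ≤ B i)
    (β : ℝ) (hβ₀ : 0 < β) (hβ₁ : β < 1) (m : ℝ)
    (V : (Fin K → ℝ) → ℝ)
    (hbd : ∃ C, ∀ ω ∈ stdSimplex ℝ (Fin K), |V ω| ≤ C)
    (hBell : ∀ ω ∈ stdSimplex ℝ (Fin K),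
      V ω = max (ω ⬝ᵥ B + β * ∑ k, ω k * V (P k)) (m + β * V (ω ᵥ* P)))
    (Bmax : ℝ) (hBmax : IsGreatest (Set.range B) Bmax) :
    ∀ ω₁ ∈ stdSimplex ℝ (Fin K), ∀ ω₂ ∈ stdSimplex ℝ (Fin K),
      |V ω₁ - V ω₂| ≤ Bmax / (1 - β) * ∑ i, |ω₁ i - ω₂ i| := by
  intro ω₁ h₁ ω₂ h₂
  obtain ⟨C, hC⟩ := hbd
  have hC₀ : 0 ≤ C := (abs_nonneg _).trans (hC ω₁ h₁)
  have hV : IsBellmanSolution P B β m V := hBell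
  have hP : P ∈ rowStochastic ℝ (Fin K) := mem_rowStochastic_iff_sum.2 ⟨hPnn, hProw⟩
  have hosc : ∀ i j, B i - B j ≤ Bmax := fun i j => by linarith [hBmax.2 ⟨i, rfl⟩, hB j]
  obtain ⟨i₀, hi₀⟩ := hBmax.1
  have hL : 0 ≤ Bmax / (1 - β) := div_nonneg (hi₀ ▸ hB i₀) (by linarith)
  have hBL : Bmax ≤ (1 - β) * (Bmax / (1 - β)) := (mul_div_cancel₀ _ (by linarith)).ge
  have hgap : ∀ k : ℕ, ∀ x ∈ stdSimplex ℝ (Fin K), ∀ y ∈ stdSimplex ℝ (Fin K),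
      |V x - V y| ≤ Bmax / (1 - β) * ∑ i, |x i - y i| + β ^ k * (2 * C) := by
    intro k
    induction k with
    | zero =>
      intro x hx y hy
      have hd₀ : 0 ≤ ∑ i, |x i - y i| := sum_nonneg fun i _ => abs_nonneg _
      nlinarith [abs_sub (V x) (V y), hC x hx, hC y hy]
    | succ k ih =>
      simpa only [pow_succ', mul_assoc] using
        hV.abs_sub_le_add_mul hP hβ₀.le hβ₁.le hL (by positivity) hosc hBL ih
  exact le_of_forall_le_add_pow_mul hβ₀.le hβ₁ fun k => hgap k ω₁ h₁ ω₂ h₂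

/-- A bounded solution of the Bellman equation is Lipschitz continuous on the simplex
with constant `B_max/(1−β)` with respect to the ℓ¹-distance. -/
theorem bellman_value_lipschitz (K : ℕ) (hK : 1 ≤ K)
    (P : Matrix (Fin K) (Fin K) ℝ)
    (hPnn : ∀ i j, 0 ≤ P i j) (hProw : ∀ i, ∑ j, P i j = 1)
    (B : Fin K → ℝ) (hB : ∀ i, 0 ≤ B i)
    (β : ℝ) (hβ₀ : 0 < β) (hβ₁ : β < 1) (m : ℝ)
    (V : (Fin K → ℝ) → ℝ)
    (hbd : ∃ C, ∀ ω ∈ stdSimplex ℝ (Fin K), |V ω| ≤ C)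
    (hBell : ∀ ω ∈ stdSimplex ℝ (Fin K),
      V ω = max (ω ⬝ᵥ B + β * ∑ k, ω k * V (P k)) (m + β * V (ω ᵥ* P)))
    (Bmax : ℝ) (hBmax : IsGreatest (Set.range B) Bmax) :
    ∀ ω₁ ∈ stdSimplex ℝ (Fin K), ∀ ω₂ ∈ stdSimplex ℝ (Fin K),
      |V ω₁ - V ω₂| ≤ Bmax / (1 - β) * ∑ i, |ω₁ i - ω₂ i| :=
  bellman_value_lipschitz_general K P hPnn hProw B hB β hβ₀ hβ₁ m V hbd hBell Bmax hBmax
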